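/- arXiv:2403.18142 — 2 statements merged into one kernel-verified Lean document; each statement's English description precedes it below -/
import Mathlib

section
/- Let Σ and Σ̃ be n×n positive definite matrices with condition number of Σ equal to κ, and suppose (1 - β/κ)Σ̃ ⪯ Σ ⪯ (1 + β/κ)Σ̃ in the Loewner order for some β ∈ (0, 1/8). Then (1 - 8β)Σ̃² ⪯ Σ² ⪯ (1 + 8β)Σ̃². -/
open Matrix

private lemma quad_nonneg {n : ℕ} {M : Matrix (Fin n) (Fin n) ℝ} (h : M.PosSemidef)
    (x : Fin n → ℝ) : 0 ≤ x ⬝ᵥ (M *ᵥ x) := by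
  simpa using h.dotProduct_mulVec_nonneg x

private lemma dot_self_nonneg {n : ℕ} (v : Fin n → ℝ) : 0 ≤ v ⬝ᵥ v :=
  Finset.sum_nonneg fun i _ => mul_self_nonneg (v i)

private lemma dot_symm {n : ℕ} {M : Matrix (Fin n) (Fin n) ℝ} (hM : M.IsHermitian)
    (v w : Fin n → ℝ) : v ⬝ᵥ (M *ᵥ w) = (M *ᵥ v) ⬝ᵥ w := by
  have hMt : Mᵀ = M := by
    rw [← conjTranspose_eq_transpose_of_trivial, hM.eq]
  rw [dotProduct_mulVec, ← mulVec_transpose, hMt]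

private lemma dot_sq_le {n : ℕ} (v w : Fin n → ℝ) :
    (v ⬝ᵥ w) ^ 2 ≤ (v ⬝ᵥ v) * (w ⬝ᵥ w) := by
  have := Finset.sum_mul_sq_le_sq_mul_sq Finset.univ v w
  simpa [dotProduct, sq] using this

private lemma conj_diag {n : ℕ} {M : Matrix (Fin n) (Fin n) ℝ} (hM : M.IsHermitian) (r : ℝ) :
    (hM.eigenvectorUnitary : Matrix (Fin n) (Fin n) ℝ) *
        diagonal (fun i => r - hM.eigenvalues i) *
        (hM.eigenvectorUnitary : Matrix (Fin n) (Fin n) ℝ)ᴴ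
      = r • (1 : Matrix (Fin n) (Fin n) ℝ) - M := by
  have hU : (hM.eigenvectorUnitary : Matrix (Fin n) (Fin n) ℝ) *
      star (hM.eigenvectorUnitary : Matrix (Fin n) (Fin n) ℝ) = 1 :=
    mem_unitaryGroup_iff.mp hM.eigenvectorUnitary.2
  have hD : diagonal (fun i => r - hM.eigenvalues i)
      = r • (1 : Matrix (Fin n) (Fin n) ℝ)
        - diagonal (RCLike.ofReal ∘ hM.eigenvalues) := by
    rw [smul_one_eq_diagonal, diagonal_sub]
    rfl
  rw [hD, Matrix.mul_sub, Matrix.sub_mul, ← star_eq_conjTranspose,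
    ← Unitary.conjStarAlgAut_apply (S := ℝ) _ (diagonal (RCLike.ofReal ∘ hM.eigenvalues)),
    ← hM.spectral_theorem,
    mul_smul_comm, smul_mul_assoc, mul_one, hU]

private lemma spectral_ub {n : ℕ} {M : Matrix (Fin n) (Fin n) ℝ} (hM : M.IsHermitian)
    {r : ℝ} (h : ∀ i, hM.eigenvalues i ≤ r) :
    (r • (1 : Matrix (Fin n) (Fin n) ℝ) - M).PosSemidef := by
  rw [← conj_diag hM r]
  exact (posSemidef_diagonal_iff.mpr fun i => sub_nonneg.mpr (h i)).mul_mul_conjTranspose_same _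

private lemma conj_diag' {n : ℕ} {M : Matrix (Fin n) (Fin n) ℝ} (hM : M.IsHermitian) (r : ℝ) :
    (hM.eigenvectorUnitary : Matrix (Fin n) (Fin n) ℝ) *
        diagonal (fun i => hM.eigenvalues i - r) *
        (hM.eigenvectorUnitary : Matrix (Fin n) (Fin n) ℝ)ᴴ
      = M - r • (1 : Matrix (Fin n) (Fin n) ℝ) := by
  have hU : (hM.eigenvectorUnitary : Matrix (Fin n) (Fin n) ℝ) *
      star (hM.eigenvectorUnitary : Matrix (Fin n) (Fin n) ℝ) = 1 :=
    mem_unitaryGroup_iff.mp hM.eigenvectorUnitary.2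
  have hD : diagonal (fun i => hM.eigenvalues i - r)
      = diagonal (RCLike.ofReal ∘ hM.eigenvalues)
        - r • (1 : Matrix (Fin n) (Fin n) ℝ) := by
    rw [smul_one_eq_diagonal, diagonal_sub]
    rfl
  rw [hD, Matrix.mul_sub, Matrix.sub_mul, ← star_eq_conjTranspose,
    ← Unitary.conjStarAlgAut_apply (S := ℝ) _ (diagonal (RCLike.ofReal ∘ hM.eigenvalues)),
    ← hM.spectral_theorem,
    mul_smul_comm, smul_mul_assoc, mul_one, hU]

private lemma spectral_lb {n : ℕ} {M : Matrix (Fin n) (Fin n) ℝ} (hM : M.IsHermitian)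
    {r : ℝ} (h : ∀ i, r ≤ hM.eigenvalues i) :
    (M - r • (1 : Matrix (Fin n) (Fin n) ℝ)).PosSemidef := by
  rw [← conj_diag' hM r]
  exact (posSemidef_diagonal_iff.mpr fun i => sub_nonneg.mpr (h i)).mul_mul_conjTranspose_same _

private lemma sq_chain {I m u K : ℝ} (h1 : I^2 ≤ m*u) (h2 : u ≤ K^2*m)
    (hm : 0 ≤ m) (hK : 0 ≤ K) : I ≤ K*m ∧ -(K*m) ≤ I := by
  have h3 : I^2 ≤ (K*m)^2 := by nlinarith
  have h4 : 0 ≤ K*m := mul_nonneg hK hm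
  constructor <;> nlinarith

set_option maxHeartbeats 1000000 in
/-- If Σ ≈_{β/κ} Σ̃ (Loewner) for PD matrices with κ = κ(Σ) and β ∈ (0,1/8),
then Σ² ≈_{8β} Σ̃². -/
theorem stmt0 {n : ℕ} (S St : Matrix (Fin n) (Fin n) ℝ)
    (hS : S.PosDef) (hSt : St.PosDef) (β κ : ℝ) (hβ : β ∈ Set.Ioo (0:ℝ) (1/8))
    (hκ : κ = (⨆ i, hS.1.eigenvalues i) / (⨅ i, hS.1.eigenvalues i))
    (h1 : (S - (1 - β/κ) • St).PosSemidef)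
    (h2 : ((1 + β/κ) • St - S).PosSemidef) :
    (S ^ 2 - (1 - 8*β) • St ^ 2).PosSemidef ∧
    ((1 + 8*β) • St ^ 2 - S ^ 2).PosSemidef := by
  obtain ⟨hβ0, hβ8⟩ := hβ
  rcases Nat.eq_zero_or_pos n with hn | hn
  · subst hn
    constructor <;>
      exact ⟨by ext i j; exact i.elim0, fun x => by simp [dotProduct, Subsingleton.elim x 0]⟩
  haveI : Nonempty (Fin n) := Fin.pos_iff_nonempty.mp hn
  set ε := β / κ with hεdef
  set a := ⨅ i, hS.1.eigenvalues i with hadef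
  set b := ⨆ i, hS.1.eigenvalues i with hbdef
  have hlampos : ∀ i, 0 < hS.1.eigenvalues i := fun i => hS.eigenvalues_pos i
  obtain ⟨i0, hi0⟩ := Finite.exists_min hS.1.eigenvalues
  obtain ⟨i1, hi1⟩ := Finite.exists_max hS.1.eigenvalues
  have ha_le : ∀ i, a ≤ hS.1.eigenvalues i := fun i =>
    ciInf_le (Set.Finite.bddBelow (Set.finite_range _)) i
  have hb_ge : ∀ i, hS.1.eigenvalues i ≤ b := fun i =>
    le_ciSup (Set.Finite.bddAbove (Set.finite_range _)) i
  have ha0 : 0 < a := lt_of_lt_of_le (hlampos i0) (le_ciInf hi0)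
  have hb0 : 0 < b := (hlampos i0).trans_le (hb_ge i0)
  have hab : a ≤ b := (ha_le i0).trans (hb_ge i0)
  have hκ1 : 1 ≤ κ := by rw [hκ]; exact (one_le_div ha0).mpr hab
  have hκ0 : 0 < κ := lt_of_lt_of_le one_pos hκ1
  have hε0 : 0 < ε := div_pos hβ0 hκ0
  have hεβ : ε ≤ β := by rw [hεdef]; exact div_le_self hβ0.le hκ1
  have hε8 : ε ≤ 1/8 := hεβ.trans hβ8.le
  have h1ε : 0 < 1 - ε := by linarith
  have hεb : ε * b = β * a := by
    rw [hεdef, hκ]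
    field_simp
  -- quadratic form bounds
  have hb' : ∀ x, x ⬝ᵥ (S *ᵥ x) ≤ b * (x ⬝ᵥ x) := by
    intro x
    have h := quad_nonneg (spectral_ub hS.1 hb_ge) x
    simp only [sub_mulVec, smul_mulVec, one_mulVec, dotProduct_sub, dotProduct_smul,
      smul_eq_mul] at h
    linarith
  have ha' : ∀ x, a * (x ⬝ᵥ x) ≤ x ⬝ᵥ (S *ᵥ x) := by
    intro x
    have h := quad_nonneg (spectral_lb hS.1 ha_le) x
    simp only [sub_mulVec, smul_mulVec, one_mulVec, dotProduct_sub, dotProduct_smul,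
      smul_eq_mul] at h
    linarith
  have hq1 : ∀ x, (1 - ε) * (x ⬝ᵥ (St *ᵥ x)) ≤ x ⬝ᵥ (S *ᵥ x) := by
    intro x
    have h := quad_nonneg h1 x
    simp only [sub_mulVec, smul_mulVec, dotProduct_sub, dotProduct_smul,
      smul_eq_mul] at h
    linarith
  have hq2 : ∀ x, x ⬝ᵥ (S *ᵥ x) ≤ (1 + ε) * (x ⬝ᵥ (St *ᵥ x)) := by
    intro x
    have h := quad_nonneg h2 x
    simp only [sub_mulVec, smul_mulVec, dotProduct_sub, dotProduct_smul,
      smul_eq_mul] at h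
    linarith
  have hStnn : ∀ x, 0 ≤ x ⬝ᵥ (St *ᵥ x) := fun x => quad_nonneg hSt.posSemidef x
  have hStUB : ∀ x, (1 - ε) * (x ⬝ᵥ (St *ᵥ x)) ≤ b * (x ⬝ᵥ x) :=
    fun x => (hq1 x).trans (hb' x)
  have hStLB : ∀ x, a * (x ⬝ᵥ x) ≤ (1 + ε) * (x ⬝ᵥ (St *ᵥ x)) :=
    fun x => (ha' x).trans (hq2 x)
  -- main pointwise bound
  have main : ∀ x : Fin n → ℝ,
      (1 - 8*β) * ((St *ᵥ x) ⬝ᵥ (St *ᵥ x)) ≤ (S *ᵥ x) ⬝ᵥ (S *ᵥ x) ∧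
      (S *ᵥ x) ⬝ᵥ (S *ᵥ x) ≤ (1 + 8*β) * ((St *ᵥ x) ⬝ᵥ (St *ᵥ x)) := by
    intro x
    set e : Fin n → ℝ := S *ᵥ x - St *ᵥ x with hedef
    have hu0 : 0 ≤ e ⬝ᵥ e := dot_self_nonneg e
    have hm0 : 0 ≤ (St *ᵥ x) ⬝ᵥ (St *ᵥ x) := dot_self_nonneg _
    have hc0 : 0 ≤ x ⬝ᵥ (St *ᵥ x) := hStnn x
    have base1 : e ⬝ᵥ (S *ᵥ x) - e ⬝ᵥ (St *ᵥ x) = e ⬝ᵥ e := by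
      rw [← dotProduct_sub, ← hedef]
    have sym1 : x ⬝ᵥ (S *ᵥ e) = e ⬝ᵥ (S *ᵥ x) := by
      rw [dot_symm hS.1, dotProduct_comm]
    have sym2 : x ⬝ᵥ (St *ᵥ e) = e ⬝ᵥ (St *ᵥ x) := by
      rw [dot_symm hSt.1, dotProduct_comm]
    have hw_ub : (1 - ε) * (e ⬝ᵥ (St *ᵥ e)) ≤ b * (e ⬝ᵥ e) := hStUB e
    -- key inequality : (1-ε) * (e⬝ᵥe) ≤ ε^2 * b * (x ⬝ᵥ St*ᵥx)
    have k1 := quad_nonneg h1 ((1-ε) • e - (ε*b) • x)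
    have k2 := quad_nonneg h2 ((1-ε) • e + (ε*b) • x)
    simp only [mulVec_add, mulVec_sub, mulVec_smul, sub_mulVec, add_mulVec, smul_mulVec,
      dotProduct_add, dotProduct_sub, add_dotProduct, sub_dotProduct, dotProduct_smul,
      smul_dotProduct, smul_eq_mul] at k1 k2
    rw [sym1, sym2] at k1 k2
    have mb1 : (1-ε)*((ε*b)*(e ⬝ᵥ (S *ᵥ x))) - (1-ε)*((ε*b)*(e ⬝ᵥ (St *ᵥ x)))
        = (1-ε)*((ε*b)*(e ⬝ᵥ e)) := by
      linear_combination ((1-ε)*(ε*b)) * base1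
    have mw : ε*((1-ε)*((1-ε)*(e ⬝ᵥ (St *ᵥ e)))) ≤ ε*((1-ε)*(b*(e ⬝ᵥ e))) :=
      mul_le_mul_of_nonneg_left (mul_le_mul_of_nonneg_left hw_ub h1ε.le) hε0.le
    have pre : (ε*b)*((1-ε)*(e ⬝ᵥ e)) ≤ (ε*b)*(ε^2*b*(x ⬝ᵥ (St *ᵥ x))) := by
      linarith [k1, k2, mb1, mw]
    have hkey : (1-ε)*(e ⬝ᵥ e) ≤ ε^2*b*(x ⬝ᵥ (St *ᵥ x)) :=
      (mul_le_mul_iff_right₀ (mul_pos hε0 hb0)).mp pre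
    -- a * c ≤ (1+ε) * m
    have CS : (x ⬝ᵥ (St *ᵥ x))^2 ≤ (x ⬝ᵥ x) * ((St *ᵥ x) ⬝ᵥ (St *ᵥ x)) := dot_sq_le x (St *ᵥ x)
    have hac : a * (x ⬝ᵥ (St *ᵥ x)) ≤ (1+ε) * ((St *ᵥ x) ⬝ᵥ (St *ᵥ x)) := by
      rcases hc0.eq_or_lt with h0 | hcpos
      · nlinarith [hm0, hε0]
      · have hSL := hStLB x
        have t1 : a*((x ⬝ᵥ (St *ᵥ x))^2) ≤ a*((x ⬝ᵥ x) * ((St *ᵥ x) ⬝ᵥ (St *ᵥ x))) :=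
          mul_le_mul_of_nonneg_left CS ha0.le
        have t2 : (a*(x ⬝ᵥ x))*((St *ᵥ x) ⬝ᵥ (St *ᵥ x))
            ≤ ((1+ε)*(x ⬝ᵥ (St *ᵥ x)))*((St *ᵥ x) ⬝ᵥ (St *ᵥ x)) :=
          mul_le_mul_of_nonneg_right hSL hm0
        have pre2 : (x ⬝ᵥ (St *ᵥ x))*(a*(x ⬝ᵥ (St *ᵥ x)))
            ≤ (x ⬝ᵥ (St *ᵥ x))*((1+ε)*((St *ᵥ x) ⬝ᵥ (St *ᵥ x))) := by
          linarith [t1, t2]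
        exact (mul_le_mul_iff_right₀ hcpos).mp pre2
    -- scalar inequality
    have hscal : ε^2*b*(1+ε) ≤ ((8/7)*β)^2*a*(1-ε) := by
      have s1 : ε^2*b*(1+ε) = (ε*(1+ε))*(β*a) := by rw [← hεb]; ring
      have s2 : ε*(1+ε) ≤ (9/8)*β := by nlinarith [hεβ, hε8, hε0.le]
      have s2m : (ε*(1+ε))*(β*a) ≤ ((9/8)*β)*(β*a) :=
        mul_le_mul_of_nonneg_right s2 (mul_nonneg hβ0.le ha0.le)
      have s4 : ((9/8)*β)*(β*a) ≤ ((8/7)*β)^2*a*(1-ε) := by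
        nlinarith [h1ε, hε8, mul_nonneg (mul_nonneg hβ0.le hβ0.le) ha0.le]
      linarith [s1, s2m, s4]
    -- u ≤ δ² m
    have d1 : a*((1-ε)*(e ⬝ᵥ e)) ≤ a*(ε^2*b*(x ⬝ᵥ (St *ᵥ x))) :=
      mul_le_mul_of_nonneg_left hkey ha0.le
    have d2 : (ε^2*b)*(a*(x ⬝ᵥ (St *ᵥ x))) ≤ (ε^2*b)*((1+ε)*((St *ᵥ x) ⬝ᵥ (St *ᵥ x))) :=
      mul_le_mul_of_nonneg_left hac (by positivity)
    have d3 : (ε^2*b*(1+ε))*((St *ᵥ x) ⬝ᵥ (St *ᵥ x))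
        ≤ (((8/7)*β)^2*a*(1-ε))*((St *ᵥ x) ⬝ᵥ (St *ᵥ x)) :=
      mul_le_mul_of_nonneg_right hscal hm0
    have pre3 : (a*(1-ε))*(e ⬝ᵥ e) ≤ (a*(1-ε))*(((8/7)*β)^2*((St *ᵥ x) ⬝ᵥ (St *ᵥ x))) := by
      linarith [d1, d2, d3]
    have hu_m : (e ⬝ᵥ e) ≤ ((8/7)*β)^2*((St *ᵥ x) ⬝ᵥ (St *ᵥ x)) :=
      (mul_le_mul_iff_right₀ (mul_pos ha0 h1ε)).mp pre3
    -- inner product bound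
    have CS2 : ((St *ᵥ x) ⬝ᵥ e)^2 ≤ ((St *ᵥ x) ⬝ᵥ (St *ᵥ x)) * (e ⬝ᵥ e) := dot_sq_le _ e
    have hD0 : 0 ≤ (8/7)*β*((St *ᵥ x) ⬝ᵥ (St *ᵥ x)) :=
      mul_nonneg (by positivity) hm0
    obtain ⟨habs1, habs2⟩ := sq_chain CS2 hu_m hm0 (by positivity : (0:ℝ) ≤ (8/7)*β)
    -- decomposition
    have hsum : S *ᵥ x = St *ᵥ x + e := by rw [hedef]; abel
    have decomp : (S *ᵥ x) ⬝ᵥ (S *ᵥ x)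
        = ((St *ᵥ x) ⬝ᵥ (St *ᵥ x)) + 2*((St *ᵥ x) ⬝ᵥ e) + (e ⬝ᵥ e) := by
      rw [hsum, dotProduct_add, add_dotProduct, add_dotProduct, dotProduct_comm e (St *ᵥ x)]
      ring
    have hβm : 0 ≤ β*((St *ᵥ x) ⬝ᵥ (St *ᵥ x)) := mul_nonneg hβ0.le hm0
    have hβ2m : β*(β*((St *ᵥ x) ⬝ᵥ (St *ᵥ x))) ≤ (1/8)*(β*((St *ᵥ x) ⬝ᵥ (St *ᵥ x))) :=
      mul_le_mul_of_nonneg_right hβ8.le hβm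
    constructor
    · linarith [decomp, habs2, hu0, hβm]
    · linarith [decomp, habs1, hu_m, hβm, hβ2m]
  -- assemble
  have e1 : ∀ x : Fin n → ℝ, x ⬝ᵥ ((S^2) *ᵥ x) = (S *ᵥ x) ⬝ᵥ (S *ᵥ x) := by
    intro x
    rw [pow_two, ← mulVec_mulVec, dot_symm hS.1]
  have e2 : ∀ x : Fin n → ℝ, x ⬝ᵥ ((St^2) *ᵥ x) = (St *ᵥ x) ⬝ᵥ (St *ᵥ x) := by
    intro x
    rw [pow_two, ← mulVec_mulVec, dot_symm hSt.1]
  have h2S : (S^2).IsHermitian := hS.1.pow 2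
  have h2St : (St^2).IsHermitian := hSt.1.pow 2
  have hsm1 : ((1 - 8*β) • St^2).IsHermitian := by
    show ((1 - 8*β) • St^2)ᴴ = _
    rw [conjTranspose_smul, h2St.eq, star_trivial]
  have hsm2 : ((1 + 8*β) • St^2).IsHermitian := by
    show ((1 + 8*β) • St^2)ᴴ = _
    rw [conjTranspose_smul, h2St.eq, star_trivial]
  constructor
  · refine .of_dotProduct_mulVec_nonneg (h2S.sub hsm1) fun x => ?_
    have h := (main x).1
    simp only [star_trivial, sub_mulVec, smul_mulVec, dotProduct_sub, dotProduct_smul,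
      smul_eq_mul]
    rw [e1 x, e2 x]
    linarith
  · refine .of_dotProduct_mulVec_nonneg (hsm2.sub h2S) fun x => ?_
    have h := (main x).2
    simp only [star_trivial, sub_mulVec, smul_mulVec, dotProduct_sub, dotProduct_smul,
      smul_eq_mul]
    rw [e1 x, e2 x]
    linarith
end

section
/- Let ℓ: ℝ^d → ℝ be L-Lipschitz smooth and c-strongly convex with minimizer value ℓ*. Suppose a sequence of points satisfies w^{(t+1)} = w^{(t)} - η g^{(t)} where ‖g^{(t)} - ∇ℓ(w^{(t)})‖ ≤ γ‖∇ℓ(w^{(t)})‖ for some γ < 1, and η = (1-γ)/((1+γ)²L). Then ℓ(w^{(T)}) - ℓ* ≤ [1 - κ⁻¹((1-γ)/(1+γ))²]^T (ℓ(w^{(0)}) - ℓ*), where κ = L/c. -/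
open Matrix
open scoped RealInnerProductSpace


theorem grad_aux {d : ℕ} (f : EuclideanSpace ℝ (Fin d) → ℝ) (L c : ℝ)
    (hL : 0 < L) (hc : 0 < c)
    (hsmooth : ∀ x y, ‖gradient f x - gradient f y‖ ≤ L * ‖x - y‖)
    (hconvex : ∀ x y, f y ≥ f x + ⟪gradient f x, y - x⟫ + c/2 * ‖y - x‖^2)
    (x : EuclideanSpace ℝ (Fin d)) : HasGradientAt f (gradient f x) x := by
  have key : ∀ y, |f y - f x - ⟪gradient f x, y - x⟫| ≤ L * ‖y - x‖^2 := by
    intro y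
    have h1 := hconvex x y
    have h2 := hconvex y x
    have hlower : 0 ≤ f y - f x - ⟪gradient f x, y - x⟫ := by
      have : 0 ≤ c/2 * ‖y - x‖^2 := by positivity
      linarith
    have hupper : f y - f x - ⟪gradient f x, y - x⟫ ≤ L * ‖y - x‖^2 := by
      have hcs : ⟪gradient f y - gradient f x, y - x⟫ ≤ ‖gradient f y - gradient f x‖ * ‖y - x‖ :=
        real_inner_le_norm _ _
      have hl : ‖gradient f y - gradient f x‖ * ‖y - x‖ ≤ (L * ‖y - x‖) * ‖y - x‖ :=
        mul_le_mul_of_nonneg_right (hsmooth y x) (norm_nonneg _)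
      have hinner : ⟪gradient f y, x - y⟫ = ⟪gradient f y - gradient f x, y - x⟫ * (-1) + ⟪gradient f x, y - x⟫ * (-1) := by
        rw [inner_sub_left]
        have : (x - y) = -(y - x) := by abel
        rw [this, inner_neg_right]
        ring
      have h0 : 0 ≤ c/2 * ‖x - y‖^2 := by positivity
      nlinarith [sq_nonneg ‖y - x‖]
    rw [abs_le]; constructor <;> linarith
  rw [hasGradientAt_iff_isLittleO, Asymptotics.isLittleO_iff]
  intro ε hε
  rw [Metric.eventually_nhds_iff]
  refine ⟨ε / L, by positivity, fun y hy => ?_⟩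
  have hd : ‖y - x‖ < ε / L := by rwa [← dist_eq_norm]
  have := key y
  rw [Real.norm_eq_abs]
  calc |f y - f x - ⟪gradient f x, y - x⟫| ≤ L * ‖y - x‖^2 := this
    _ = (L * ‖y - x‖) * ‖y - x‖ := by ring
    _ ≤ ε * ‖y - x‖ := by
        apply mul_le_mul_of_nonneg_right _ (norm_nonneg _)
        calc L * ‖y - x‖ ≤ L * (ε / L) := by nlinarith [norm_nonneg (y - x)]
          _ = ε := by field_simp
    _ = ε * ‖y - x‖ := rfl


theorem descent_aux {d : ℕ} (f : EuclideanSpace ℝ (Fin d) → ℝ) (L c : ℝ)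
    (hL : 0 < L) (hc : 0 < c)
    (hgrad : ∀ x, HasGradientAt f (gradient f x) x)
    (hsmooth : ∀ x y, ‖gradient f x - gradient f y‖ ≤ L * ‖x - y‖)
    (x y : EuclideanSpace ℝ (Fin d)) :
    f y ≤ f x + ⟪gradient f x, y - x⟫ + L/2 * ‖y - x‖^2 := by
  set v := y - x with hv
  set φ' : ℝ → ℝ := fun t => ⟪gradient f (x + t • v), v⟫ with hφ'
  have hline : ∀ t : ℝ, HasDerivAt (fun s : ℝ => x + s • v) v t := by
    intro t
    simpa using ((hasDerivAt_id t).smul_const v).const_add x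
  have hderiv : ∀ t : ℝ, HasDerivAt (fun s => f (x + s • v)) (φ' t) t := by
    intro t
    have h := ((hgrad (x + t • v)).hasFDerivAt).comp_hasDerivAt t (hline t)
    simpa [hφ', InnerProductSpace.toDual_apply_apply, Function.comp_def] using h
  have hGcont : Continuous fun z => gradient f z := by
    have : LipschitzWith (Real.toNNReal L) fun z => gradient f z := by
      apply LipschitzWith.of_dist_le_mul
      intro a b
      rw [dist_eq_norm, dist_eq_norm]
      calc ‖gradient f a - gradient f b‖ ≤ L * ‖a - b‖ := hsmooth a b
        _ ≤ Real.toNNReal L * ‖a - b‖ := by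
            apply mul_le_mul_of_nonneg_right _ (norm_nonneg _)
            exact Real.le_coe_toNNReal L
    exact this.continuous
  have hcont : Continuous φ' := by
    apply Continuous.inner
    · exact hGcont.comp (by continuity)
    · exact continuous_const
  have hFTC : ∫ t in (0:ℝ)..1, φ' t = (fun s : ℝ => f (x + s • v)) 1 - (fun s : ℝ => f (x + s • v)) 0 :=
    intervalIntegral.integral_eq_sub_of_hasDerivAt (fun t _ => hderiv t) (hcont.intervalIntegrable 0 1)
  simp only [] at hFTC
  have hbound : ∀ t ∈ Set.Icc (0:ℝ) 1, φ' t ≤ ⟪gradient f x, v⟫ + (L * ‖v‖^2) * t := by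
    intro t ht
    have h1 : φ' t - ⟪gradient f x, v⟫ = ⟪gradient f (x + t • v) - gradient f x, v⟫ := by
      rw [inner_sub_left]
    have h2 : ⟪gradient f (x + t • v) - gradient f x, v⟫ ≤ ‖gradient f (x + t • v) - gradient f x‖ * ‖v‖ :=
      real_inner_le_norm _ _
    have h3 : ‖gradient f (x + t • v) - gradient f x‖ ≤ L * (t * ‖v‖) := by
      have := hsmooth (x + t • v) x
      simpa [norm_smul, abs_of_nonneg ht.1] using this
    nlinarith [norm_nonneg v, ht.1]
  have hint : ∫ t in (0:ℝ)..1, φ' t ≤ ∫ t in (0:ℝ)..1, (⟪gradient f x, v⟫ + (L * ‖v‖^2) * t) := by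
    apply intervalIntegral.integral_mono_on zero_le_one (hcont.intervalIntegrable 0 1)
    · exact Continuous.intervalIntegrable (by fun_prop) 0 1
    · exact hbound
  have hval : ∫ t in (0:ℝ)..1, (⟪gradient f x, v⟫ + (L * ‖v‖^2) * t) = ⟪gradient f x, v⟫ + L/2 * ‖v‖^2 := by
    have h2 : ∫ t in (0:ℝ)..1, ((L * ‖v‖^2) * t) = (L * ‖v‖^2) * (1/2) := by
      rw [intervalIntegral.integral_const_mul, integral_id]; norm_num
    rw [intervalIntegral.integral_add intervalIntegrable_const
      (Continuous.intervalIntegrable (by fun_prop) 0 1), h2]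
    simp
    ring
  have e1 : x + (1:ℝ) • v = y := by rw [hv]; simp
  have e0 : x + (0:ℝ) • v = x := by simp
  rw [e1, e0] at hFTC
  linarith [hint.trans_eq hval, hFTC.symm.le, hFTC.le]


set_option maxHeartbeats 1000000 in
theorem stmt2_main {d : ℕ} (f : EuclideanSpace ℝ (Fin d) → ℝ) (L c γ η : ℝ)
    (hL : 0 < L) (hc : 0 < c) (hγ0 : 0 ≤ γ) (hγ : γ < 1)
    (hdescent : ∀ x y, f y ≤ f x + ⟪gradient f x, y - x⟫ + L/2 * ‖y - x‖^2)
    (hconvex : ∀ x y, f y ≥ f x + ⟪gradient f x, y - x⟫ + c/2 * ‖y - x‖^2)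
    (w g : ℕ → EuclideanSpace ℝ (Fin d))
    (hg : ∀ t, ‖g t - gradient f (w t)‖ ≤ γ * ‖gradient f (w t)‖)
    (hη : η = (1 - γ)/((1 + γ)^2 * L))
    (hstep : ∀ t, w (t+1) = w t - η • g t)
    (fstar : ℝ) (hfstar : fstar = ⨅ x, f x) (T : ℕ) :
    f (w T) - fstar ≤ (1 - (c/L) * ((1-γ)/(1+γ))^2)^T * (f (w 0) - fstar) := by
  set ρ : ℝ := 1 - (c/L) * ((1-γ)/(1+γ))^2 with hρ
  rcases Nat.eq_zero_or_pos d with hd | hd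
  · have hsub : Subsingleton (EuclideanSpace ℝ (Fin d)) := by subst hd; infer_instance
    have hw : w T = w 0 := Subsingleton.elim _ _
    have hfs : fstar = f (w 0) := by
      rw [hfstar]
      have h : ∀ x, f x = f (w 0) := fun x => by rw [Subsingleton.elim x (w 0)]
      simp [h]
    rw [hw, hfs]; simp
  have hγ1 : (0:ℝ) < 1 + γ := by linarith
  have hγ2 : (0:ℝ) < 1 - γ := by linarith
  -- c ≤ L
  have hcL : c ≤ L := by
    set y0 : EuclideanSpace ℝ (Fin d) := EuclideanSpace.single ⟨0, hd⟩ 1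
    have hnorm : ‖y0 - 0‖ = 1 := by simp [y0, EuclideanSpace.norm_single]
    have h1 := hconvex 0 y0
    have h2 := hdescent 0 y0
    rw [hnorm] at h1 h2
    linarith
  -- ρ bounds
  have hfrac : 0 < (1-γ)/(1+γ) := div_pos hγ2 hγ1
  have hfrac1 : (1-γ)/(1+γ) ≤ 1 := by rw [div_le_one hγ1]; linarith
  have hρ0 : 0 ≤ ρ := by
    have h1 : (c/L) ≤ 1 := by rw [div_le_one hL]; exact hcL
    have h2 : ((1-γ)/(1+γ))^2 ≤ 1 := by nlinarith
    have h3 : 0 ≤ (c/L) := le_of_lt (div_pos hc hL)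
    have h4 : (c/L) * ((1-γ)/(1+γ))^2 ≤ 1 * 1 :=
      mul_le_mul h1 h2 (sq_nonneg _) zero_le_one
    rw [hρ]; linarith
  -- lower bound on f: ∀ x y, f y ≥ f x - ‖∇f x‖²/(2c)
  have hlb : ∀ x y, f x - ‖gradient f x‖^2 / (2*c) ≤ f y := by
    intro x y
    have h1 := hconvex x y
    have hcs : -(‖gradient f x‖ * ‖y - x‖) ≤ ⟪gradient f x, y - x⟫ :=
      (abs_le.mp (abs_real_inner_le_norm (gradient f x) (y - x))).1
    have hkey : 0 ≤ c/2 * ‖y - x‖^2 - ‖gradient f x‖ * ‖y - x‖ + ‖gradient f x‖^2/(2*c) := by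
      have he : c/2 * ‖y - x‖^2 - ‖gradient f x‖ * ‖y - x‖ + ‖gradient f x‖^2/(2*c)
          = (c * ‖y - x‖ - ‖gradient f x‖)^2 / (2*c) := by
        field_simp; ring
      rw [he]; positivity
    linarith
  have hbdd : BddBelow (Set.range f) :=
    ⟨f 0 - ‖gradient f 0‖^2 / (2*c), by rintro _ ⟨y, rfl⟩; exact hlb 0 y⟩
  have hfle : ∀ x, fstar ≤ f x := fun x => hfstar ▸ ciInf_le hbdd x
  -- PL inequality
  have hPL : ∀ x, 2*c*(f x - fstar) ≤ ‖gradient f x‖^2 := by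
    intro x
    have h : f x - ‖gradient f x‖^2/(2*c) ≤ fstar := by
      rw [hfstar]; exact le_ciInf (fun y => hlb x y)
    have h2c : (0:ℝ) < 2*c := by linarith
    have h' : f x - fstar ≤ ‖gradient f x‖^2 / (2*c) := by linarith
    rw [le_div_iff₀ h2c] at h'
    nlinarith
  -- per-step contraction
  have hstepineq : ∀ t, f (w (t+1)) - fstar ≤ ρ * (f (w t) - fstar) := by
    intro t
    set x := w t
    set G := gradient f x with hG
    have hy : w (t+1) - x = -η • g t := by rw [hstep t]; module
    have hdesc := hdescent x (w (t+1))
    rw [hy] at hdesc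
    have hη0 : 0 < η := by
      rw [hη]; positivity
    have hinner : ⟪G, -η • g t⟫ = -η * ⟪G, g t⟫ := by
      rw [real_inner_smul_right]
    have hlow : (1-γ) * ‖G‖^2 ≤ ⟪G, g t⟫ := by
      have h1 : ⟪G, g t⟫ = ‖G‖^2 + ⟪G, g t - G⟫ := by
        rw [inner_sub_right, real_inner_self_eq_norm_sq]; ring
      have h2 : |⟪G, g t - G⟫| ≤ ‖G‖ * ‖g t - G‖ := abs_real_inner_le_norm _ _
      have h3 := hg t
      have h4 : ‖G‖ * ‖g t - G‖ ≤ γ * ‖G‖^2 := by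
        calc ‖G‖ * ‖g t - G‖ ≤ ‖G‖ * (γ * ‖G‖) :=
              mul_le_mul_of_nonneg_left h3 (norm_nonneg _)
          _ = γ * ‖G‖^2 := by ring
      have := abs_le.mp h2
      nlinarith
    have hgnorm : ‖g t‖ ≤ (1+γ) * ‖G‖ := by
      calc ‖g t‖ = ‖G + (g t - G)‖ := by congr 1; abel
        _ ≤ ‖G‖ + ‖g t - G‖ := norm_add_le _ _
        _ ≤ ‖G‖ + γ * ‖G‖ := by linarith [hg t]
        _ = (1+γ) * ‖G‖ := by ring
    have hg2 : ‖g t‖^2 ≤ (1+γ)^2 * ‖G‖^2 := by nlinarith [norm_nonneg (g t), norm_nonneg G]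
    have hnorm2 : ‖(-η) • g t‖^2 ≤ η^2 * ((1+γ)^2 * ‖G‖^2) := by
      rw [norm_smul, Real.norm_eq_abs, abs_neg, abs_of_pos hη0, mul_pow]
      exact mul_le_mul_of_nonneg_left hg2 (sq_nonneg η)
    have hkey : f (w (t+1)) ≤ f x - (((1-γ)/(1+γ))^2 / (2*L)) * ‖G‖^2 := by
      have hL2 : (0:ℝ) < L/2 := by linarith
      have e : η * (1-γ) - L/2 * (η^2 * (1+γ)^2) = ((1-γ)/(1+γ))^2 / (2*L) := by
        rw [hη]; field_simp; ring
      have s1 : f (w (t+1)) ≤ f x + (-η * ⟪G, g t⟫) + L/2 * ‖(-η) • g t‖^2 := by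
        rw [← hinner]; exact hdesc
      have s2 : L/2 * ‖(-η) • g t‖^2 ≤ L/2 * (η^2 * ((1+γ)^2 * ‖G‖^2)) :=
        mul_le_mul_of_nonneg_left hnorm2 hL2.le
      have s3 : η * ((1-γ) * ‖G‖^2) ≤ η * ⟪G, g t⟫ :=
        mul_le_mul_of_nonneg_left hlow hη0.le
      have s4 : f (w (t+1)) ≤ f x - (η * (1-γ) - L/2 * (η^2 * (1+γ)^2)) * ‖G‖^2 := by
        nlinarith [s1, s2, s3]
      rw [← e]; exact s4
    have hK : (0:ℝ) ≤ ((1-γ)/(1+γ))^2 / (2*L) := by positivity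
    have hPLx := hPL x
    have hrw : ρ = 1 - 2*c*(((1-γ)/(1+γ))^2 / (2*L)) := by
      rw [hρ]; field_simp
    have := mul_le_mul_of_nonneg_left hPLx hK
    rw [hrw]
    nlinarith [hfle x]
  -- induction
  induction T with
  | zero => simp
  | succ n ih =>
    calc f (w (n+1)) - fstar ≤ ρ * (f (w n) - fstar) := hstepineq n
      _ ≤ ρ * (ρ^n * (f (w 0) - fstar)) := mul_le_mul_of_nonneg_left ih hρ0
      _ = ρ^(n+1) * (f (w 0) - fstar) := by ring


/-- descent lemma for approximate gradient descent on an L-smooth,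
c-strongly convex function. -/
theorem stmt2 {d : ℕ} (f : EuclideanSpace ℝ (Fin d) → ℝ) (L c γ η : ℝ)
    (hL : 0 < L) (hc : 0 < c) (hγ0 : 0 ≤ γ) (hγ : γ < 1)
    (hsmooth : ∀ x y, ‖gradient f x - gradient f y‖ ≤ L * ‖x - y‖)
    (hconvex : ∀ x y, f y ≥ f x + ⟪gradient f x, y - x⟫ + c/2 * ‖y - x‖^2)
    (w g : ℕ → EuclideanSpace ℝ (Fin d))
    (hg : ∀ t, ‖g t - gradient f (w t)‖ ≤ γ * ‖gradient f (w t)‖)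
    (hη : η = (1 - γ)/((1 + γ)^2 * L))
    (hstep : ∀ t, w (t+1) = w t - η • g t)
    (fstar : ℝ) (hfstar : fstar = ⨅ x, f x) (T : ℕ) :
    f (w T) - fstar ≤ (1 - (c/L) * ((1-γ)/(1+γ))^2)^T * (f (w 0) - fstar) := by
  have hgrad : ∀ x, HasGradientAt f (gradient f x) x :=
    grad_aux f L c hL hc hsmooth hconvex
  have hdescent : ∀ x y, f y ≤ f x + ⟪gradient f x, y - x⟫ + L/2 * ‖y - x‖^2 :=
    descent_aux f L c hL hc hgrad hsmooth
  exact stmt2_main f L c γ η hL hc hγ0 hγ hdescent hconvex w g hg hη hstep fstar hfstar T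
end
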